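/- arXiv:math/0311024 — 4 statements merged into one kernel-verified Lean document; each statement's English description precedes it below -/
import Mathlib

section
/- For every S ∈ SO(4) (real orthogonal 4×4 matrix with determinant 1) and every v ∈ ℝ³, the matrix S · M₊(v) · Sᵀ lies in the range of M₊, and the matrix S · M₋(v) · Sᵀ lies in the range of M₋. -/
open Matrix

/-- The map `M₊ : ℝ³ → so(4)`. -/
def Mplus (v : Fin 3 → ℝ) : Matrix (Fin 4) (Fin 4) ℝ :=
  !![0, v 0, v 1, v 2;
     -v 0, 0, v 2, -v 1;
     -v 1, -v 2, 0, v 0;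
     -v 2, v 1, -v 0, 0]

/-- The map `M₋ : ℝ³ → so(4)`. -/
def Mminus (v : Fin 3 → ℝ) : Matrix (Fin 4) (Fin 4) ℝ :=
  !![0, v 0, v 1, v 2;
     -v 0, 0, -v 2, v 1;
     -v 1, v 2, 0, -v 0;
     -v 2, -v 1, v 0, 0]

set_option maxHeartbeats 4000000 in
/-- conjugation by `S ∈ SO(4)` preserves each of the two `so(3)`-factors of
`so(4)`, i.e. the ranges of `M₊` and `M₋`. -/
theorem SO4_conj_preserves_factors (S : Matrix (Fin 4) (Fin 4) ℝ)
    (hS : S ∈ Matrix.orthogonalGroup (Fin 4) ℝ) (hdet : S.det = 1) (v : Fin 3 → ℝ) :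
    S * Mplus v * Sᵀ ∈ Set.range Mplus ∧ S * Mminus v * Sᵀ ∈ Set.range Mminus := by
  rw [Matrix.mem_orthogonalGroup_iff] at hS
  have hS' : S * Sᵀ = 1 := by simpa using hS
  have o00 := congrFun (congrFun hS' 0) 0
  have o01 := congrFun (congrFun hS' 0) 1
  have o02 := congrFun (congrFun hS' 0) 2
  have o03 := congrFun (congrFun hS' 0) 3
  have o11 := congrFun (congrFun hS' 1) 1
  have o12 := congrFun (congrFun hS' 1) 2
  have o13 := congrFun (congrFun hS' 1) 3
  have o22 := congrFun (congrFun hS' 2) 2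
  have o23 := congrFun (congrFun hS' 2) 3
  have o33 := congrFun (congrFun hS' 3) 3
  simp [Matrix.mul_apply, Fin.sum_univ_four] at o00 o01 o02 o03 o11 o12 o13 o22 o23 o33
  have hd : S 0 3 * S 1 2 * S 2 1 * S 3 0 - S 0 3 * S 1 2 * S 2 0 * S 3 1 - S 0 3 * S 1 1 * S 2 2 * S 3 0 + S 0 3 * S 1 1 * S 2 0 * S 3 2 + S 0 3 * S 1 0 * S 2 2 * S 3 1 - S 0 3 * S 1 0 * S 2 1 * S 3 2 - S 0 2 * S 1 3 * S 2 1 * S 3 0 + S 0 2 * S 1 3 * S 2 0 * S 3 1 + S 0 2 * S 1 1 * S 2 3 * S 3 0 - S 0 2 * S 1 1 * S 2 0 * S 3 3 - S 0 2 * S 1 0 * S 2 3 * S 3 1 + S 0 2 * S 1 0 * S 2 1 * S 3 3 + S 0 1 * S 1 3 * S 2 2 * S 3 0 - S 0 1 * S 1 3 * S 2 0 * S 3 2 - S 0 1 * S 1 2 * S 2 3 * S 3 0 + S 0 1 * S 1 2 * S 2 0 * S 3 3 + S 0 1 * S 1 0 * S 2 3 * S 3 2 - S 0 1 * S 1 0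 * S 2 2 * S 3 3 - S 0 0 * S 1 3 * S 2 2 * S 3 1 + S 0 0 * S 1 3 * S 2 1 * S 3 2 + S 0 0 * S 1 2 * S 2 3 * S 3 1 - S 0 0 * S 1 2 * S 2 1 * S 3 3 - S 0 0 * S 1 1 * S 2 3 * S 3 2 + S 0 0 * S 1 1 * S 2 2 * S 3 3 = 1 := by
    rw [← hdet, Matrix.det_succ_row_zero]
    simp [Fin.sum_univ_succ, Matrix.det_fin_three, Matrix.submatrix_apply,
      show (Fin.succ 2 : Fin 4) = 3 from rfl, show (Fin.castSucc 2 : Fin 4) = 2 from rfl,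
      show ((1:Fin 4).succAbove 2) = 3 from rfl, show ((2:Fin 4).succAbove 2) = 3 from rfl,
      show ((3:Fin 4).succAbove 2) = 2 from rfl]
    ring
  have hu : S *ᵥ ![S 3 0 - (S 0 3 * S 1 2 * S 2 1 - S 0 3 * S 1 1 * S 2 2 - S 0 2 * S 1 3 * S 2 1 + S 0 2 * S 1 1 * S 2 3 + S 0 1 * S 1 3 * S 2 2 - S 0 1 * S 1 2 * S 2 3), S 3 1 - (-S 0 3 * S 1 2 * S 2 0 + S 0 3 * S 1 0 * S 2 2 + S 0 2 * S 1 3 * S 2 0 - S 0 2 * S 1 0 * S 2 3 - S 0 0 * S 1 3 * S 2 2 + S 0 0 * S 1 2 * S 2 3), S 3 2 - (S 0 3 * S 1 1 * S 2 0 - S 0 3 * S 1 0 * S 2 1 - S 0 1 * S 1 3 * S 2 0 + S 0 1 * S 1 0 * S 2 3 + S 0 0 * S 1 3 * S 2 1 - S 0 0 * S 1 1 * S 2 3), S 3 3 - (-S 0 2 * S 1 1 * S 2 0 + S 0 2 * S 1 0 * S 2 1 + S 0 1 * S 1 2 * S 2 0 - S 0 1 * S 1 0 * S 2 2 - S 0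 0 * S 1 2 * S 2 1 + S 0 0 * S 1 1 * S 2 2)] = 0 := by
    ext i; fin_cases i
    · simp [Matrix.mulVec, dotProduct, Fin.sum_univ_four]
      linear_combination o03
    · simp [Matrix.mulVec, dotProduct, Fin.sum_univ_four]
      linear_combination o13
    · simp [Matrix.mulVec, dotProduct, Fin.sum_univ_four]
      linear_combination o23
    · simp [Matrix.mulVec, dotProduct, Fin.sum_univ_four]
      linear_combination o33 - hd
  have hu0 : (![S 3 0 - (S 0 3 * S 1 2 * S 2 1 - S 0 3 * S 1 1 * S 2 2 - S 0 2 * S 1 3 * S 2 1 + S 0 2 * S 1 1 * S 2 3 + S 0 1 * S 1 3 * S 2 2 - S 0 1 * S 1 2 * S 2 3), S 3 1 - (-S 0 3 * S 1 2 * S 2 0 + S 0 3 * S 1 0 * S 2 2 + S 0 2 * S 1 3 * S 2 0 - S 0 2 * S 1 0 * S 2 3 - S 0 0 * S 1 3 * S 2 2 + S 0 0 * S 1 2 * S 2 3), S 3 2 - (S 0 3 * S 1 1 * S 2 0 - S 0 3 * S 1 0 * S 2 1 - S 0 1 * S 1 3 * S 2 0 + S 0 1 * S 1 0 * S 2 3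 + S 0 0 * S 1 3 * S 2 1 - S 0 0 * S 1 1 * S 2 3), S 3 3 - (-S 0 2 * S 1 1 * S 2 0 + S 0 2 * S 1 0 * S 2 1 + S 0 1 * S 1 2 * S 2 0 - S 0 1 * S 1 0 * S 2 2 - S 0 0 * S 1 2 * S 2 1 + S 0 0 * S 1 1 * S 2 2)] : Fin 4 → ℝ) = 0 := by
    have h2 : Sᵀ * S = 1 := mul_eq_one_comm.mp hS'
    calc (![S 3 0 - (S 0 3 * S 1 2 * S 2 1 - S 0 3 * S 1 1 * S 2 2 - S 0 2 * S 1 3 * S 2 1 + S 0 2 * S 1 1 * S 2 3 + S 0 1 * S 1 3 * S 2 2 - S 0 1 * S 1 2 * S 2 3), S 3 1 - (-S 0 3 * S 1 2 * S 2 0 + S 0 3 * S 1 0 * S 2 2 + S 0 2 * S 1 3 * S 2 0 - S 0 2 * S 1 0 * S 2 3 - S 0 0 * S 1 3 * S 2 2 + S 0 0 * S 1 2 * S 2 3), S 3 2 - (S 0 3 * S 1 1 * S 2 0 - S 0 3 * S 1 0 * S 2 1 - S 0 1 * S 1 3 * S 2 0 + S 0 1 * S 1 0 * S 2 3 + S 0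 0 * S 1 3 * S 2 1 - S 0 0 * S 1 1 * S 2 3), S 3 3 - (-S 0 2 * S 1 1 * S 2 0 + S 0 2 * S 1 0 * S 2 1 + S 0 1 * S 1 2 * S 2 0 - S 0 1 * S 1 0 * S 2 2 - S 0 0 * S 1 2 * S 2 1 + S 0 0 * S 1 1 * S 2 2)] : Fin 4 → ℝ) = (Sᵀ * S) *ᵥ ![S 3 0 - (S 0 3 * S 1 2 * S 2 1 - S 0 3 * S 1 1 * S 2 2 - S 0 2 * S 1 3 * S 2 1 + S 0 2 * S 1 1 * S 2 3 + S 0 1 * S 1 3 * S 2 2 - S 0 1 * S 1 2 * S 2 3), S 3 1 - (-S 0 3 * S 1 2 * S 2 0 + S 0 3 * S 1 0 * S 2 2 + S 0 2 * S 1 3 * S 2 0 - S 0 2 * S 1 0 * S 2 3 - S 0 0 * S 1 3 * S 2 2 + S 0 0 * S 1 2 * S 2 3), S 3 2 - (S 0 3 * S 1 1 * S 2 0 - S 0 3 * S 1 0 * S 2 1 - S 0 1 * S 1 3 * S 2 0 + S 0 1 * S 1 0 * S 2 3 + S 0 0 * S 1 3 * S 2 1 - S 0 0 * S 1 1 * S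 2 3), S 3 3 - (-S 0 2 * S 1 1 * S 2 0 + S 0 2 * S 1 0 * S 2 1 + S 0 1 * S 1 2 * S 2 0 - S 0 1 * S 1 0 * S 2 2 - S 0 0 * S 1 2 * S 2 1 + S 0 0 * S 1 1 * S 2 2)] := by rw [h2, Matrix.one_mulVec]
      _ = Sᵀ *ᵥ (S *ᵥ ![S 3 0 - (S 0 3 * S 1 2 * S 2 1 - S 0 3 * S 1 1 * S 2 2 - S 0 2 * S 1 3 * S 2 1 + S 0 2 * S 1 1 * S 2 3 + S 0 1 * S 1 3 * S 2 2 - S 0 1 * S 1 2 * S 2 3), S 3 1 - (-S 0 3 * S 1 2 * S 2 0 + S 0 3 * S 1 0 * S 2 2 + S 0 2 * S 1 3 * S 2 0 - S 0 2 * S 1 0 * S 2 3 - S 0 0 * S 1 3 * S 2 2 + S 0 0 * S 1 2 * S 2 3), S 3 2 - (S 0 3 * S 1 1 * S 2 0 - S 0 3 * S 1 0 * S 2 1 - S 0 1 * S 1 3 * S 2 0 + S 0 1 * S 1 0 * S 2 3 + S 0 0 * S 1 3 * S 2 1 - S 0 0 * S 1 1 * S 2 3), S 3 3 - (-S 0 2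 * S 1 1 * S 2 0 + S 0 2 * S 1 0 * S 2 1 + S 0 1 * S 1 2 * S 2 0 - S 0 1 * S 1 0 * S 2 2 - S 0 0 * S 1 2 * S 2 1 + S 0 0 * S 1 1 * S 2 2)]) := by rw [Matrix.mulVec_mulVec]
      _ = 0 := by rw [hu, Matrix.mulVec_zero]
  have h0 : S 3 0 = S 0 3 * S 1 2 * S 2 1 - S 0 3 * S 1 1 * S 2 2 - S 0 2 * S 1 3 * S 2 1 + S 0 2 * S 1 1 * S 2 3 + S 0 1 * S 1 3 * S 2 2 - S 0 1 * S 1 2 * S 2 3 := by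
    have := congrFun hu0 0; simp at this; linear_combination this
  have h1 : S 3 1 = -S 0 3 * S 1 2 * S 2 0 + S 0 3 * S 1 0 * S 2 2 + S 0 2 * S 1 3 * S 2 0 - S 0 2 * S 1 0 * S 2 3 - S 0 0 * S 1 3 * S 2 2 + S 0 0 * S 1 2 * S 2 3 := by
    have := congrFun hu0 1; simp at this; linear_combination this
  have h2 : S 3 2 = S 0 3 * S 1 1 * S 2 0 - S 0 3 * S 1 0 * S 2 1 - S 0 1 * S 1 3 * S 2 0 + S 0 1 * S 1 0 * S 2 3 + S 0 0 * S 1 3 * S 2 1 - S 0 0 * S 1 1 * S 2 3 := by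
    have := congrFun hu0 2; simp at this; linear_combination this
  have h3 : S 3 3 = -S 0 2 * S 1 1 * S 2 0 + S 0 2 * S 1 0 * S 2 1 + S 0 1 * S 1 2 * S 2 0 - S 0 1 * S 1 0 * S 2 2 - S 0 0 * S 1 2 * S 2 1 + S 0 0 * S 1 1 * S 2 2 := by
    have := congrFun hu0 3; simp at this; linear_combination this
  have P001 : S 0 0 * S 3 1 - S 0 1 * S 3 0 = -S 1 3 * S 2 2 + S 1 2 * S 2 3 := by
    linear_combination S 0 0 * h1 - S 0 1 * h0 + S 1 2 * S 2 3 * o00 - S 1 3 * S 2 2 * o00 - S 0 2 * S 2 3 * o01 + S 0 3 * S 2 2 * o01 + S 0 2 * S 1 3 * o02 - S 0 3 * S 1 2 * o02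
  have P002 : S 0 0 * S 3 2 - S 0 2 * S 3 0 = S 1 3 * S 2 1 - S 1 1 * S 2 3 := by
    linear_combination S 0 0 * h2 - S 0 2 * h0 - S 1 1 * S 2 3 * o00 + S 1 3 * S 2 1 * o00 + S 0 1 * S 2 3 * o01 - S 0 3 * S 2 1 * o01 - S 0 1 * S 1 3 * o02 + S 0 3 * S 1 1 * o02
  have P003 : S 0 0 * S 3 3 - S 0 3 * S 3 0 = -S 1 2 * S 2 1 + S 1 1 * S 2 2 := by
    linear_combination S 0 0 * h3 - S 0 3 * h0 + S 1 1 * S 2 2 * o00 - S 1 2 * S 2 1 * o00 - S 0 1 * S 2 2 * o01 + S 0 2 * S 2 1 * o01 + S 0 1 * S 1 2 * o02 - S 0 2 * S 1 1 * o02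
  have P012 : S 0 1 * S 3 2 - S 0 2 * S 3 1 = -S 1 3 * S 2 0 + S 1 0 * S 2 3 := by
    linear_combination S 0 1 * h2 - S 0 2 * h1 + S 1 0 * S 2 3 * o00 - S 1 3 * S 2 0 * o00 - S 0 0 * S 2 3 * o01 + S 0 3 * S 2 0 * o01 + S 0 0 * S 1 3 * o02 - S 0 3 * S 1 0 * o02
  have P013 : S 0 1 * S 3 3 - S 0 3 * S 3 1 = S 1 2 * S 2 0 - S 1 0 * S 2 2 := by
    linear_combination S 0 1 * h3 - S 0 3 * h1 - S 1 0 * S 2 2 * o00 + S 1 2 * S 2 0 * o00 + S 0 0 * S 2 2 * o01 - S 0 2 * S 2 0 * o01 - S 0 0 * S 1 2 * o02 + S 0 2 * S 1 0 * o02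
  have P023 : S 0 2 * S 3 3 - S 0 3 * S 3 2 = -S 1 1 * S 2 0 + S 1 0 * S 2 1 := by
    linear_combination S 0 2 * h3 - S 0 3 * h2 + S 1 0 * S 2 1 * o00 - S 1 1 * S 2 0 * o00 - S 0 0 * S 2 1 * o01 + S 0 1 * S 2 0 * o01 + S 0 0 * S 1 1 * o02 - S 0 1 * S 1 0 * o02
  have P101 : S 1 0 * S 3 1 - S 1 1 * S 3 0 = S 0 3 * S 2 2 - S 0 2 * S 2 3 := by
    linear_combination S 1 0 * h1 - S 1 1 * h0 + S 1 2 * S 2 3 * o01 - S 1 3 * S 2 2 * o01 - S 0 2 * S 2 3 * o11 + S 0 3 * S 2 2 * o11 + S 0 2 * S 1 3 * o12 - S 0 3 * S 1 2 * o12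
  have P102 : S 1 0 * S 3 2 - S 1 2 * S 3 0 = -S 0 3 * S 2 1 + S 0 1 * S 2 3 := by
    linear_combination S 1 0 * h2 - S 1 2 * h0 - S 1 1 * S 2 3 * o01 + S 1 3 * S 2 1 * o01 + S 0 1 * S 2 3 * o11 - S 0 3 * S 2 1 * o11 - S 0 1 * S 1 3 * o12 + S 0 3 * S 1 1 * o12
  have P103 : S 1 0 * S 3 3 - S 1 3 * S 3 0 = S 0 2 * S 2 1 - S 0 1 * S 2 2 := by
    linear_combination S 1 0 * h3 - S 1 3 * h0 + S 1 1 * S 2 2 * o01 - S 1 2 * S 2 1 * o01 - S 0 1 * S 2 2 * o11 + S 0 2 * S 2 1 * o11 + S 0 1 * S 1 2 * o12 - S 0 2 * S 1 1 * o12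
  have P112 : S 1 1 * S 3 2 - S 1 2 * S 3 1 = S 0 3 * S 2 0 - S 0 0 * S 2 3 := by
    linear_combination S 1 1 * h2 - S 1 2 * h1 + S 1 0 * S 2 3 * o01 - S 1 3 * S 2 0 * o01 - S 0 0 * S 2 3 * o11 + S 0 3 * S 2 0 * o11 + S 0 0 * S 1 3 * o12 - S 0 3 * S 1 0 * o12
  have P113 : S 1 1 * S 3 3 - S 1 3 * S 3 1 = -S 0 2 * S 2 0 + S 0 0 * S 2 2 := by
    linear_combination S 1 1 * h3 - S 1 3 * h1 - S 1 0 * S 2 2 * o01 + S 1 2 * S 2 0 * o01 + S 0 0 * S 2 2 * o11 - S 0 2 * S 2 0 * o11 - S 0 0 * S 1 2 * o12 + S 0 2 * S 1 0 * o12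
  have P123 : S 1 2 * S 3 3 - S 1 3 * S 3 2 = S 0 1 * S 2 0 - S 0 0 * S 2 1 := by
    linear_combination S 1 2 * h3 - S 1 3 * h2 + S 1 0 * S 2 1 * o01 - S 1 1 * S 2 0 * o01 - S 0 0 * S 2 1 * o11 + S 0 1 * S 2 0 * o11 + S 0 0 * S 1 1 * o12 - S 0 1 * S 1 0 * o12
  have P201 : S 2 0 * S 3 1 - S 2 1 * S 3 0 = -S 0 3 * S 1 2 + S 0 2 * S 1 3 := by
    linear_combination S 2 0 * h1 - S 2 1 * h0 + S 1 2 * S 2 3 * o02 - S 1 3 * S 2 2 * o02 - S 0 2 * S 2 3 * o12 + S 0 3 * S 2 2 * o12 + S 0 2 * S 1 3 * o22 - S 0 3 * S 1 2 * o22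
  have P202 : S 2 0 * S 3 2 - S 2 2 * S 3 0 = S 0 3 * S 1 1 - S 0 1 * S 1 3 := by
    linear_combination S 2 0 * h2 - S 2 2 * h0 - S 1 1 * S 2 3 * o02 + S 1 3 * S 2 1 * o02 + S 0 1 * S 2 3 * o12 - S 0 3 * S 2 1 * o12 - S 0 1 * S 1 3 * o22 + S 0 3 * S 1 1 * o22
  have P203 : S 2 0 * S 3 3 - S 2 3 * S 3 0 = -S 0 2 * S 1 1 + S 0 1 * S 1 2 := by
    linear_combination S 2 0 * h3 - S 2 3 * h0 + S 1 1 * S 2 2 * o02 - S 1 2 * S 2 1 * o02 - S 0 1 * S 2 2 * o12 + S 0 2 * S 2 1 * o12 + S 0 1 * S 1 2 * o22 - S 0 2 * S 1 1 * o22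
  have P212 : S 2 1 * S 3 2 - S 2 2 * S 3 1 = -S 0 3 * S 1 0 + S 0 0 * S 1 3 := by
    linear_combination S 2 1 * h2 - S 2 2 * h1 + S 1 0 * S 2 3 * o02 - S 1 3 * S 2 0 * o02 - S 0 0 * S 2 3 * o12 + S 0 3 * S 2 0 * o12 + S 0 0 * S 1 3 * o22 - S 0 3 * S 1 0 * o22
  have P213 : S 2 1 * S 3 3 - S 2 3 * S 3 1 = S 0 2 * S 1 0 - S 0 0 * S 1 2 := by
    linear_combination S 2 1 * h3 - S 2 3 * h1 - S 1 0 * S 2 2 * o02 + S 1 2 * S 2 0 * o02 + S 0 0 * S 2 2 * o12 - S 0 2 * S 2 0 * o12 - S 0 0 * S 1 2 * o22 + S 0 2 * S 1 0 * o22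
  have P223 : S 2 2 * S 3 3 - S 2 3 * S 3 2 = -S 0 1 * S 1 0 + S 0 0 * S 1 1 := by
    linear_combination S 2 2 * h3 - S 2 3 * h2 + S 1 0 * S 2 1 * o02 - S 1 1 * S 2 0 * o02 - S 0 0 * S 2 1 * o12 + S 0 1 * S 2 0 * o12 + S 0 0 * S 1 1 * o22 - S 0 1 * S 1 0 * o22
  constructor
  · refine ⟨![(S * Mplus v * Sᵀ) 0 1, (S * Mplus v * Sᵀ) 0 2, (S * Mplus v * Sᵀ) 0 3], ?_⟩
    ext i j
    fin_cases i <;> fin_cases j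
    · simp [Mplus, Mminus, Matrix.mul_apply, Fin.sum_univ_four] <;> ring
    · simp [Mplus, Mminus, Matrix.mul_apply, Fin.sum_univ_four] <;> ring
    · simp [Mplus, Mminus, Matrix.mul_apply, Fin.sum_univ_four] <;> ring
    · simp [Mplus, Mminus, Matrix.mul_apply, Fin.sum_univ_four] <;> ring
    · simp [Mplus, Mminus, Matrix.mul_apply, Fin.sum_univ_four] <;> ring
    · simp [Mplus, Mminus, Matrix.mul_apply, Fin.sum_univ_four] <;> ring
    · simp [Mplus, Mminus, Matrix.mul_apply, Fin.sum_univ_four] <;>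
        linear_combination v 0 * P001 + v 1 * P002 + v 2 * P003 + v 2 * P012 - v 1 * P013 + v 0 * P023
    · simp [Mplus, Mminus, Matrix.mul_apply, Fin.sum_univ_four] <;>
        linear_combination - v 0 * P101 - v 1 * P102 - v 2 * P103 - v 2 * P112 + v 1 * P113 - v 0 * P123
    · simp [Mplus, Mminus, Matrix.mul_apply, Fin.sum_univ_four] <;> ring
    · simp [Mplus, Mminus, Matrix.mul_apply, Fin.sum_univ_four] <;>
        linear_combination - v 0 * P001 - v 1 * P002 - v 2 * P003 - v 2 * P012 + v 1 * P013 - v 0 * P023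
    · simp [Mplus, Mminus, Matrix.mul_apply, Fin.sum_univ_four] <;> ring
    · simp [Mplus, Mminus, Matrix.mul_apply, Fin.sum_univ_four] <;>
        linear_combination - v 0 * P201 - v 1 * P202 - v 2 * P203 - v 2 * P212 + v 1 * P213 - v 0 * P223
    · simp [Mplus, Mminus, Matrix.mul_apply, Fin.sum_univ_four] <;> ring
    · simp [Mplus, Mminus, Matrix.mul_apply, Fin.sum_univ_four] <;>
        linear_combination v 0 * P101 + v 1 * P102 + v 2 * P103 + v 2 * P112 - v 1 * P113 + v 0 * P123
    · simp [Mplus, Mminus, Matrix.mul_apply, Fin.sum_univ_four] <;>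
        linear_combination v 0 * P201 + v 1 * P202 + v 2 * P203 + v 2 * P212 - v 1 * P213 + v 0 * P223
    · simp [Mplus, Mminus, Matrix.mul_apply, Fin.sum_univ_four] <;> ring
  · refine ⟨![(S * Mminus v * Sᵀ) 0 1, (S * Mminus v * Sᵀ) 0 2, (S * Mminus v * Sᵀ) 0 3], ?_⟩
    ext i j
    fin_cases i <;> fin_cases j
    · simp [Mplus, Mminus, Matrix.mul_apply, Fin.sum_univ_four] <;> ring
    · simp [Mplus, Mminus, Matrix.mul_apply, Fin.sum_univ_four] <;> ring
    · simp [Mplus, Mminus, Matrix.mul_apply, Fin.sum_univ_four] <;> ring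
    · simp [Mplus, Mminus, Matrix.mul_apply, Fin.sum_univ_four] <;> ring
    · simp [Mplus, Mminus, Matrix.mul_apply, Fin.sum_univ_four] <;> ring
    · simp [Mplus, Mminus, Matrix.mul_apply, Fin.sum_univ_four] <;> ring
    · simp [Mplus, Mminus, Matrix.mul_apply, Fin.sum_univ_four] <;>
        linear_combination - v 0 * P001 - v 1 * P002 - v 2 * P003 + v 2 * P012 - v 1 * P013 + v 0 * P023
    · simp [Mplus, Mminus, Matrix.mul_apply, Fin.sum_univ_four] <;>
        linear_combination - v 0 * P101 - v 1 * P102 - v 2 * P103 + v 2 * P112 - v 1 * P113 + v 0 * P123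
    · simp [Mplus, Mminus, Matrix.mul_apply, Fin.sum_univ_four] <;> ring
    · simp [Mplus, Mminus, Matrix.mul_apply, Fin.sum_univ_four] <;>
        linear_combination v 0 * P001 + v 1 * P002 + v 2 * P003 - v 2 * P012 + v 1 * P013 - v 0 * P023
    · simp [Mplus, Mminus, Matrix.mul_apply, Fin.sum_univ_four] <;> ring
    · simp [Mplus, Mminus, Matrix.mul_apply, Fin.sum_univ_four] <;>
        linear_combination - v 0 * P201 - v 1 * P202 - v 2 * P203 + v 2 * P212 - v 1 * P213 + v 0 * P223
    · simp [Mplus, Mminus, Matrix.mul_apply, Fin.sum_univ_four] <;> ring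
    · simp [Mplus, Mminus, Matrix.mul_apply, Fin.sum_univ_four] <;>
        linear_combination v 0 * P101 + v 1 * P102 + v 2 * P103 - v 2 * P112 + v 1 * P113 - v 0 * P123
    · simp [Mplus, Mminus, Matrix.mul_apply, Fin.sum_univ_four] <;>
        linear_combination v 0 * P201 + v 1 * P202 + v 2 * P203 - v 2 * P212 + v 1 * P213 - v 0 * P223
    · simp [Mplus, Mminus, Matrix.mul_apply, Fin.sum_univ_four] <;> ring
end

section
/- Let 0 ≤ α₋ ≤ β₋ and 0 ≤ α₊ ≤ β₊ be real numbers and let t ∈ ℝ. Then there exists a symmetric positive semidefinite 2×2 real matrix Q with eigenvalues α₊ and β₊ (equivalently Tr(Q) = α₊ + β₊ and det(Q) = α₊β₊) satisfying α₋·Q₁₁ + β₋·Q₂₂ = t if and only if α₋β₊ + α₊β₋ ≤ t ≤ α₋α₊ + β₋β₊. -/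
/-!
Since `Q₀₀ = a + b - Q₁₁`, the determinant condition `Q₀₀ Q₁₁ - Q₀₁² = a b` reads
`(Q₁₁ - a)(b - Q₁₁) = Q₀₁²`, so the diagonal entry `Q₁₁` of a positive semidefinite `Q` with
eigenvalues `a ≤ b` ranges exactly over `[a, b]`. The invariant `t = α₋ (α₊ + β₊ - Q₁₁) + β₋ Q₁₁`
is a nondecreasing affine function of `Q₁₁`, so its range is the image of `[α₊, β₊]`.
-/

open Matrix Set

theorem Matrix.posSemidef_fin_two_iff {Q : Matrix (Fin 2) (Fin 2) ℝ} :
    Q.PosSemidef ↔ Q 1 0 = Q 0 1 ∧ 0 ≤ Q 0 0 ∧ 0 ≤ Q 1 1 ∧ Q 0 1 ^ 2 ≤ Q 0 0 * Q 1 1 := by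
  constructor
  · intro hQ
    have hsymm : Q 1 0 = Q 0 1 := by simpa using hQ.isHermitian.apply 0 1
    have hdet := hQ.det_nonneg
    rw [det_fin_two, hsymm] at hdet
    exact ⟨hsymm, hQ.diag_nonneg, hQ.diag_nonneg, by linarith⟩
  · rintro ⟨hsymm, h00, h11, hdet⟩
    refine .of_dotProduct_mulVec_nonneg ?_ fun v => ?_
    · ext i j
      fin_cases i <;> fin_cases j <;> simp [hsymm]
    · have hform : star v ⬝ᵥ Q *ᵥ v =
          Q 0 0 * v 0 ^ 2 + 2 * Q 0 1 * v 0 * v 1 + Q 1 1 * v 1 ^ 2 := by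
        simp [dotProduct, mulVec, Fin.sum_univ_two, hsymm]
        ring
      rw [hform]
      rcases h00.eq_or_lt with h0 | h0
      · have : Q 0 1 = 0 := by nlinarith
        rw [← h0, this]
        nlinarith [mul_nonneg h11 (sq_nonneg (v 1))]
      · nlinarith [sq_nonneg (Q 0 0 * v 0 + Q 0 1 * v 1), sq_nonneg (v 1)]

theorem exists_posSemidef_trace_det_apply_one_one_iff {a b x : ℝ} (ha : 0 ≤ a) (hab : a ≤ b) :
    (∃ Q : Matrix (Fin 2) (Fin 2) ℝ,
      Q.PosSemidef ∧ Q.trace = a + b ∧ Q.det = a * b ∧ Q 1 1 = x) ↔ x ∈ Icc a b := by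
  constructor
  · rintro ⟨Q, hQ, htr, hdet, rfl⟩
    obtain ⟨hsymm, -, -, -⟩ := posSemidef_fin_two_iff.mp hQ
    rw [trace_fin_two] at htr
    rw [det_fin_two, hsymm] at hdet
    have : (Q 1 1 - a) * (b - Q 1 1) = Q 0 1 ^ 2 := by linear_combination hdet - Q 1 1 * htr
    constructor <;> nlinarith [sq_nonneg (Q 0 1)]
  · rintro ⟨hax, hxb⟩
    set c := √((x - a) * (b - x))
    have hc : c ^ 2 = (x - a) * (b - x) :=
      Real.sq_sqrt (mul_nonneg (by linarith) (by linarith))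
    refine ⟨!![a + b - x, c; c, x], posSemidef_fin_two_iff.mpr ?_, ?_, ?_, rfl⟩
    · exact ⟨rfl, show 0 ≤ a + b - x by linarith, show 0 ≤ x by linarith,
        show c ^ 2 ≤ (a + b - x) * x by nlinarith [mul_nonneg ha (ha.trans hab)]⟩
    · simp [trace_fin_two]
    · simp [det_fin_two]
      linear_combination -hc

theorem range_of_invariant_t_general (αm βm αp βp t : ℝ)
    (h2 : αm ≤ βm) (h3 : 0 ≤ αp) (h4 : αp ≤ βp) :
    (∃ Q : Matrix (Fin 2) (Fin 2) ℝ, Q.PosSemidef ∧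
      Q.trace = αp + βp ∧ Q.det = αp * βp ∧ αm * Q 0 0 + βm * Q 1 1 = t) ↔
    (αm * βp + αp * βm ≤ t ∧ t ≤ αm * αp + βm * βp) := by
  set f : ℝ → ℝ := fun x => αm * (αp + βp - x) + βm * x
  have hf : f '' Icc αp βp = Icc (αm * βp + αp * βm) (αm * αp + βm * βp) := by
    rw [(by fun_prop : Continuous f).continuousOn.image_Icc_of_monotoneOn h4
      fun x _ y _ hxy => by simp only [f]; nlinarith]
    congr 1 <;> ring
  have hfQ {Q : Matrix (Fin 2) (Fin 2) ℝ} (htr : Q.trace = αp + βp) :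
      f (Q 1 1) = αm * Q 0 0 + βm * Q 1 1 := by
    rw [trace_fin_two] at htr
    simp only [f, ← htr]
    ring
  rw [← mem_Icc, ← hf]
  constructor
  · rintro ⟨Q, hQ, htr, hdet, rfl⟩
    exact ⟨Q 1 1, (exists_posSemidef_trace_det_apply_one_one_iff h3 h4).mp
      ⟨Q, hQ, htr, hdet, rfl⟩, hfQ htr⟩
  · rintro ⟨x, hx, rfl⟩
    obtain ⟨Q, hQ, htr, hdet, rfl⟩ := (exists_posSemidef_trace_det_apply_one_one_iff h3 h4).mpr hx
    exact ⟨Q, hQ, htr, hdet, (hfQ htr).symm⟩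

/-- for `0 ≤ α₋ ≤ β₋`, `0 ≤ α₊ ≤ β₊` and `t ∈ ℝ`, there is a positive semidefinite
symmetric 2×2 real matrix `Q` with eigenvalues `α₊, β₊` (i.e. `Tr Q = α₊ + β₊`,
`det Q = α₊·β₊`) and `α₋·Q₁₁ + β₋·Q₂₂ = t` iff `α₋β₊ + α₊β₋ ≤ t ≤ α₋α₊ + β₋β₊`. -/
theorem range_of_invariant_t (αm βm αp βp t : ℝ)
    (h1 : 0 ≤ αm) (h2 : αm ≤ βm) (h3 : 0 ≤ αp) (h4 : αp ≤ βp) :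
    (∃ Q : Matrix (Fin 2) (Fin 2) ℝ, Q.PosSemidef ∧
      Q.trace = αp + βp ∧ Q.det = αp * βp ∧ αm * Q 0 0 + βm * Q 1 1 = t) ↔
    (αm * βp + αp * βm ≤ t ∧ t ≤ αm * αp + βm * βp) :=
  range_of_invariant_t_general αm βm αp βp t h2 h3 h4
end

section
/- For every linear map j : ℝ² → Skew(4) there exist T ∈ O(2), S ∈ O(4), and real numbers a, b, p, q, r with 0 ≤ a ≤ b and p, q, r ≥ 0 such that the map j'(z) := Sᵀ · j(Tz) · S satisfies j'₋(e₁) = (a, 0, 0), j'₋(e₂) = (0, b, 0), j'₊(e₁) = (p, 0, 0), and j'₊(e₂) = (r, q, 0). -/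
/-!
Under `(v₊, v₋)` the skew 4×4 matrices become `ℝ³ ⊕ ℝ³`, and conjugating by the double rotation
with angles `α, β` in the coordinate planes `01, 23` (resp. `03, 12`) rotates the two factors about
their first (resp. third) axis by `-(α + β)` and `α - β`. These angles are independent, so every
pair of products of such axis rotations is realised by one `S ∈ O(4)`. It remains to work in
`ℝ²` and `ℝ³`: a rotation `T` of `ℝ²` diagonalises the Gram matrix of `j₋(e₁), j₋(e₂)` with the
smaller entry first, and flipping `e₁` if needed makes `⟨j₊(Te₁), j₊(Te₂)⟩ ≥ 0`. Then axis
rotations carry the orthogonal pair `j₋(Te₁), j₋(Te₂)` onto the first two axes, put `j₊(Te₁)` on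
the first axis and `j₊(Te₂)` into the plane of the first two axes with `q ≥ 0`; finally `r ≥ 0`
because `p r = ⟨j₊(Te₁), j₊(Te₂)⟩`.
-/

open Matrix

/-- The component `v₊(M) ∈ ℝ³` of a 4×4 matrix under the splitting `so(4) ≅ ℝ³₊ ⊕ ℝ³₋`. -/
noncomputable def vplus (M : Matrix (Fin 4) (Fin 4) ℝ) : Fin 3 → ℝ :=
  ![(M 0 1 + M 2 3) / 2, (M 0 2 - M 1 3) / 2, (M 0 3 + M 1 2) / 2]

/-- The component `v₋(M) ∈ ℝ³`. -/
noncomputable def vminus (M : Matrix (Fin 4) (Fin 4) ℝ) : Fin 3 → ℝ :=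
  ![(M 0 1 - M 2 3) / 2, (M 0 2 + M 1 3) / 2, (M 0 3 - M 1 2) / 2]

open Real

lemma exists_angle_rotate_nonneg (a b : ℝ) :
    ∃ θ, 0 ≤ cos θ * a - sin θ * b ∧ sin θ * a + cos θ * b = 0 := by
  set z : ℂ := ⟨a, b⟩
  have ha : ‖z‖ * cos (Complex.arg z) = a := Complex.norm_mul_cos_arg z
  have hb : ‖z‖ * sin (Complex.arg z) = b := Complex.norm_mul_sin_arg z
  refine ⟨-Complex.arg z, ?_, ?_⟩
  · rw [← ha, ← hb, cos_neg, sin_neg]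
    have := cos_sq_add_sin_sq (Complex.arg z)
    nlinarith [norm_nonneg z]
  · rw [← ha, ← hb, cos_neg, sin_neg]
    ring

section Plane

variable {ι : Type*} [Fintype ι]

lemma exists_angle_dotProduct_eq_zero (u v : ι → ℝ) :
    ∃ θ, (cos θ • u + sin θ • v) ⬝ᵥ (-sin θ • u + cos θ • v) = 0 := by
  -- `2θ` is the polar angle of `(|u|² - |v|², 2⟨u, v⟩)`, the angle diagonalising the Gram matrix
  set z : ℂ := ⟨u ⬝ᵥ u - v ⬝ᵥ v, 2 * (u ⬝ᵥ v)⟩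
  set θ := Complex.arg z / 2
  have hc : ‖z‖ * (cos θ ^ 2 - sin θ ^ 2) = u ⬝ᵥ u - v ⬝ᵥ v := by
    rw [← cos_two_mul', mul_div_cancel₀ _ two_ne_zero]
    exact Complex.norm_mul_cos_arg z
  have hs : ‖z‖ * (2 * sin θ * cos θ) = 2 * (u ⬝ᵥ v) := by
    rw [← sin_two_mul, mul_div_cancel₀ _ two_ne_zero]
    exact Complex.norm_mul_sin_arg z
  refine ⟨θ, ?_⟩
  simp only [add_dotProduct, dotProduct_add, smul_dotProduct, dotProduct_smul, smul_eq_mul,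
    dotProduct_comm v u]
  rcases eq_or_ne z 0 with hz | hz
  · have hre : u ⬝ᵥ u - v ⬝ᵥ v = 0 := congrArg Complex.re hz
    have him : 2 * (u ⬝ᵥ v) = 0 := congrArg Complex.im hz
    linear_combination (-(sin θ * cos θ)) * hre + (cos θ ^ 2 - sin θ ^ 2) / 2 * him
  · refine mul_left_cancel₀ (norm_ne_zero_iff.2 hz) ?_
    linear_combination (u ⬝ᵥ v) * hc - (u ⬝ᵥ u - v ⬝ᵥ v) / 2 * hs

lemma exists_angle_dotProduct_eq_zero_and_le (u v : ι → ℝ) :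
    ∃ θ, (cos θ • u + sin θ • v) ⬝ᵥ (-sin θ • u + cos θ • v) = 0 ∧
      (cos θ • u + sin θ • v) ⬝ᵥ (cos θ • u + sin θ • v) ≤
        (-sin θ • u + cos θ • v) ⬝ᵥ (-sin θ • u + cos θ • v) := by
  obtain ⟨θ, hθ⟩ := exists_angle_dotProduct_eq_zero u v
  by_cases hle : (cos θ • u + sin θ • v) ⬝ᵥ (cos θ • u + sin θ • v) ≤
      (-sin θ • u + cos θ • v) ⬝ᵥ (-sin θ • u + cos θ • v)
  · exact ⟨θ, hθ, hle⟩
  -- a quarter turn swaps the two vectors, up to sign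
  refine ⟨θ + π / 2, ?_⟩
  have e₀ : cos (θ + π / 2) • u + sin (θ + π / 2) • v = -sin θ • u + cos θ • v := by
    rw [cos_add_pi_div_two, sin_add_pi_div_two]
  have e₁ : -sin (θ + π / 2) • u + cos (θ + π / 2) • v = -(cos θ • u + sin θ • v) := by
    rw [cos_add_pi_div_two, sin_add_pi_div_two]; module
  rw [e₀, e₁, dotProduct_neg, dotProduct_comm, hθ, neg_zero, dotProduct_neg, neg_dotProduct,
    neg_neg]
  exact ⟨rfl, (not_le.1 hle).le⟩

lemma LinearMap.map_vecCons_two {M : Type*} [AddCommGroup M] [Module ℝ M]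
    (A : (Fin 2 → ℝ) →ₗ[ℝ] M) (a b : ℝ) :
    A ![a, b] = a • A (Pi.single 0 1) + b • A (Pi.single 1 1) := by
  rw [← map_smul, ← map_smul, ← map_add]
  congr 1
  ext i
  fin_cases i <;> simp

lemma exists_mem_orthogonalGroup_two_map_col_orthogonal (A B : (Fin 2 → ℝ) →ₗ[ℝ] (ι → ℝ)) :
    ∃ T ∈ orthogonalGroup (Fin 2) ℝ,
      A (T.col 0) ⬝ᵥ A (T.col 1) = 0 ∧ A (T.col 0) ⬝ᵥ A (T.col 0) ≤ A (T.col 1) ⬝ᵥ A (T.col 1) ∧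
        0 ≤ B (T.col 0) ⬝ᵥ B (T.col 1) := by
  obtain ⟨θ, horth, hle⟩ :=
    exists_angle_dotProduct_eq_zero_and_le (A (Pi.single 0 1)) (A (Pi.single 1 1))
  rw [← A.map_vecCons_two, ← A.map_vecCons_two] at horth hle
  -- flipping the first column changes the sign of the last inner product only
  obtain ⟨ε, hε, hB⟩ : ∃ ε : ℝ, ε * ε = 1 ∧ 0 ≤ ε * (B ![cos θ, sin θ] ⬝ᵥ B ![-sin θ, cos θ]) := by
    rcases le_total 0 (B ![cos θ, sin θ] ⬝ᵥ B ![-sin θ, cos θ]) with h | h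
    · exact ⟨1, by norm_num, by linarith⟩
    · exact ⟨-1, by norm_num, by linarith⟩
  set T : Matrix (Fin 2) (Fin 2) ℝ := !![ε * cos θ, -sin θ; ε * sin θ, cos θ]
  have hT₀ : T.col 0 = ε • ![cos θ, sin θ] := by ext i; fin_cases i <;> simp [T]
  have hT₁ : T.col 1 = ![-sin θ, cos θ] := by ext i; fin_cases i <;> simp [T]
  refine ⟨T, ?_, ?_, ?_, ?_⟩
  · rw [mem_orthogonalGroup_iff']
    ext i k
    fin_cases i <;> fin_cases k <;> simp [T, mul_apply, Fin.sum_univ_two]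
    · linear_combination ε ^ 2 * cos_sq_add_sin_sq θ + hε
    · ring
    · ring
    · linear_combination cos_sq_add_sin_sq θ
  · rw [hT₀, hT₁, map_smul, smul_dotProduct, horth, smul_zero]
  · rw [hT₀, hT₁, map_smul, smul_dotProduct, dotProduct_smul, smul_smul, hε, one_smul]
    exact hle
  · rw [hT₀, hT₁, map_smul, smul_dotProduct]
    exact hB

end Plane

lemma dotProduct_mulVec_mulVec_of_mem_orthogonalGroup {n R : Type*} [Fintype n] [DecidableEq n]
    [CommRing R] {A : Matrix n n R} (hA : A ∈ orthogonalGroup n R) (x y : n → R) :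
    (A *ᵥ x) ⬝ᵥ (A *ᵥ y) = x ⬝ᵥ y := by
  rw [mem_orthogonalGroup_iff'] at hA
  rw [dotProduct_mulVec, ← vecMul_transpose, vecMul_vecMul, hA, vecMul_one]

noncomputable def rotX (θ : ℝ) : Matrix (Fin 3) (Fin 3) ℝ :=
  !![1, 0, 0; 0, cos θ, -sin θ; 0, sin θ, cos θ]

noncomputable def rotZ (θ : ℝ) : Matrix (Fin 3) (Fin 3) ℝ :=
  !![cos θ, -sin θ, 0; sin θ, cos θ, 0; 0, 0, 1]

lemma rotX_mulVec (θ : ℝ) (v : Fin 3 → ℝ) :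
    rotX θ *ᵥ v = ![v 0, cos θ * v 1 - sin θ * v 2, sin θ * v 1 + cos θ * v 2] := by
  simp [rotX, vecHead, vecTail, sub_eq_add_neg]

lemma rotZ_mulVec (θ : ℝ) (v : Fin 3 → ℝ) :
    rotZ θ *ᵥ v = ![cos θ * v 0 - sin θ * v 1, sin θ * v 0 + cos θ * v 1, v 2] := by
  simp [rotZ, vecHead, vecTail, sub_eq_add_neg]

@[simp] lemma rotX_zero : rotX 0 = 1 := by
  simp [rotX, one_fin_three]

@[simp] lemma rotZ_zero : rotZ 0 = 1 := by
  simp [rotZ, one_fin_three]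

lemma rotX_mem_orthogonalGroup (θ : ℝ) : rotX θ ∈ orthogonalGroup (Fin 3) ℝ := by
  rw [mem_orthogonalGroup_iff']
  ext i k
  fin_cases i <;> fin_cases k <;> simp [rotX, mul_apply, Fin.sum_univ_three, one_apply] <;>
    ring_nf <;> simp

lemma rotZ_mem_orthogonalGroup (θ : ℝ) : rotZ θ ∈ orthogonalGroup (Fin 3) ℝ := by
  rw [mem_orthogonalGroup_iff']
  ext i k
  fin_cases i <;> fin_cases k <;> simp [rotZ, mul_apply, Fin.sum_univ_three, one_apply] <;>
    ring_nf <;> simp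

def axisRotations : Submonoid (Matrix (Fin 3) (Fin 3) ℝ) :=
  Submonoid.closure (Set.range rotX ∪ Set.range rotZ)

lemma rotX_mem_axisRotations (θ : ℝ) : rotX θ ∈ axisRotations :=
  Submonoid.subset_closure (Or.inl ⟨θ, rfl⟩)

lemma rotZ_mem_axisRotations (θ : ℝ) : rotZ θ ∈ axisRotations :=
  Submonoid.subset_closure (Or.inr ⟨θ, rfl⟩)

lemma axisRotations_le_orthogonalGroup : axisRotations ≤ orthogonalGroup (Fin 3) ℝ := by
  rw [axisRotations, Submonoid.closure_le]
  rintro _ (⟨θ, rfl⟩ | ⟨θ, rfl⟩)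
  exacts [rotX_mem_orthogonalGroup θ, rotZ_mem_orthogonalGroup θ]

lemma exists_axisRotations_mulVec_eq (v : Fin 3 → ℝ) :
    ∃ P ∈ axisRotations, ∃ a, 0 ≤ a ∧ P *ᵥ v = ![a, 0, 0] := by
  obtain ⟨θ, ht, hθ⟩ := exists_angle_rotate_nonneg (v 1) (v 2)
  obtain ⟨φ, ha, hφ⟩ := exists_angle_rotate_nonneg (v 0) (cos θ * v 1 - sin θ * v 2)
  refine ⟨rotZ φ * rotX θ, mul_mem (rotZ_mem_axisRotations φ) (rotX_mem_axisRotations θ), _, ha, ?_⟩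
  rw [← mulVec_mulVec, rotX_mulVec, rotZ_mulVec]
  ext i; fin_cases i <;> simp [hθ, hφ]

lemma exists_axisRotations_frame (x y : Fin 3 → ℝ) :
    ∃ P ∈ axisRotations, ∃ a r q, 0 ≤ a ∧ 0 ≤ q ∧ (a = 0 → r = 0) ∧
      P *ᵥ x = ![a, 0, 0] ∧ P *ᵥ y = ![r, q, 0] := by
  obtain ⟨P, hP, a, ha, hx⟩ := exists_axisRotations_mulVec_eq x
  rcases eq_or_ne a 0 with rfl | ha₀
  · obtain ⟨P', hP', b, hb, hy⟩ := exists_axisRotations_mulVec_eq (P *ᵥ y)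
    refine ⟨rotZ (π / 2) * P' * P, mul_mem (mul_mem (rotZ_mem_axisRotations _) hP') hP,
      0, 0, b, le_rfl, hb, fun _ => rfl, ?_, ?_⟩
    · have h0 : (![0, 0, 0] : Fin 3 → ℝ) = 0 := by simp
      rw [← mulVec_mulVec, ← mulVec_mulVec, hx, h0, mulVec_zero, mulVec_zero]
    · rw [← mulVec_mulVec, ← mulVec_mulVec, hy, rotZ_mulVec]
      ext i; fin_cases i <;> simp
  · obtain ⟨θ, hq, hθ⟩ := exists_angle_rotate_nonneg ((P *ᵥ y) 1) ((P *ᵥ y) 2)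
    refine ⟨rotX θ * P, mul_mem (rotX_mem_axisRotations θ) hP, a, (P *ᵥ y) 0, _, ha, hq,
      fun h => absurd h ha₀, ?_, ?_⟩
    · rw [← mulVec_mulVec, hx, rotX_mulVec]
      ext i; fin_cases i <;> simp
    · rw [← mulVec_mulVec, rotX_mulVec]
      ext i; fin_cases i <;> simp [hθ]

lemma exists_axisRotations_of_dotProduct_eq_zero {u v : Fin 3 → ℝ} (huv : u ⬝ᵥ v = 0)
    (hle : u ⬝ᵥ u ≤ v ⬝ᵥ v) :
    ∃ Q ∈ axisRotations, ∃ a b, 0 ≤ a ∧ a ≤ b ∧ Q *ᵥ u = ![a, 0, 0] ∧ Q *ᵥ v = ![0, b, 0] := by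
  obtain ⟨Q, hQ, a, r, b, ha, hb, hr, hu, hv⟩ := exists_axisRotations_frame u v
  have hdot := dotProduct_mulVec_mulVec_of_mem_orthogonalGroup (axisRotations_le_orthogonalGroup hQ)
  have har : a * r = 0 := by simpa [hu, hv] using (hdot u v).trans huv
  obtain rfl : r = 0 := (mul_eq_zero.1 har).elim hr id
  have hab : a ^ 2 ≤ b ^ 2 := by simpa [hu, hv, sq, ← hdot u u, ← hdot v v] using hle
  exact ⟨Q, hQ, a, b, ha, (pow_le_pow_iff_left₀ ha hb two_ne_zero).1 hab, hu, hv⟩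

lemma exists_axisRotations_of_dotProduct_nonneg {x y : Fin 3 → ℝ} (hxy : 0 ≤ x ⬝ᵥ y) :
    ∃ P ∈ axisRotations, ∃ p q r, 0 ≤ p ∧ 0 ≤ q ∧ 0 ≤ r ∧
      P *ᵥ x = ![p, 0, 0] ∧ P *ᵥ y = ![r, q, 0] := by
  obtain ⟨P, hP, p, r, q, hp, hq, hr, hx, hy⟩ := exists_axisRotations_frame x y
  have hpr : 0 ≤ p * r := by
    rw [← dotProduct_mulVec_mulVec_of_mem_orthogonalGroup (axisRotations_le_orthogonalGroup hP),
      hx, hy] at hxy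
    simpa using hxy
  refine ⟨P, hP, p, q, r, hp, hq, ?_, hx, hy⟩
  rcases hp.eq_or_lt with rfl | hp₀
  · exact (hr rfl).ge
  · exact nonneg_of_mul_nonneg_right hpr hp₀

noncomputable def vplusₗ : Matrix (Fin 4) (Fin 4) ℝ →ₗ[ℝ] Fin 3 → ℝ where
  toFun := vplus
  map_add' A B := by ext i; fin_cases i <;> simp [vplus] <;> ring
  map_smul' c A := by ext i; fin_cases i <;> simp [vplus] <;> ring

noncomputable def vminusₗ : Matrix (Fin 4) (Fin 4) ℝ →ₗ[ℝ] Fin 3 → ℝ where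
  toFun := vminus
  map_add' A B := by ext i; fin_cases i <;> simp [vminus] <;> ring
  map_smul' c A := by ext i; fin_cases i <;> simp [vminus] <;> ring

lemma eq_of_transpose_eq_neg {M : Matrix (Fin 4) (Fin 4) ℝ} (hM : Mᵀ = -M) :
    M = !![0, M 0 1, M 0 2, M 0 3; -M 0 1, 0, M 1 2, M 1 3;
      -M 0 2, -M 1 2, 0, M 2 3; -M 0 3, -M 1 3, -M 2 3, 0] := by
  ext i j
  have hij : M j i = -M i j := congr_fun (congr_fun hM i) j
  fin_cases i <;> fin_cases j <;> simp at hij ⊢ <;> linarith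

noncomputable def rotPlanes0123 (α β : ℝ) : Matrix (Fin 4) (Fin 4) ℝ :=
  !![cos α, -sin α, 0, 0; sin α, cos α, 0, 0; 0, 0, cos β, -sin β; 0, 0, sin β, cos β]

noncomputable def rotPlanes0312 (α β : ℝ) : Matrix (Fin 4) (Fin 4) ℝ :=
  !![cos α, 0, 0, -sin α; 0, cos β, -sin β, 0; 0, sin β, cos β, 0; sin α, 0, 0, cos α]

lemma rotPlanes0123_mem_orthogonalGroup (α β : ℝ) :
    rotPlanes0123 α β ∈ orthogonalGroup (Fin 4) ℝ := by
  rw [mem_orthogonalGroup_iff']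
  ext i k
  fin_cases i <;> fin_cases k <;> simp [rotPlanes0123, mul_apply, Fin.sum_univ_four, one_apply] <;>
    ring_nf <;> simp

lemma rotPlanes0312_mem_orthogonalGroup (α β : ℝ) :
    rotPlanes0312 α β ∈ orthogonalGroup (Fin 4) ℝ := by
  rw [mem_orthogonalGroup_iff']
  ext i k
  fin_cases i <;> fin_cases k <;> simp [rotPlanes0312, mul_apply, Fin.sum_univ_four, one_apply] <;>
    ring_nf <;> simp

lemma rotPlanes0123_conj {M : Matrix (Fin 4) (Fin 4) ℝ} (hM : Mᵀ = -M) (α β : ℝ) :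
    vplus ((rotPlanes0123 α β)ᵀ * M * rotPlanes0123 α β) = rotX (-(α + β)) *ᵥ vplus M ∧
      vminus ((rotPlanes0123 α β)ᵀ * M * rotPlanes0123 α β) = rotX (α - β) *ᵥ vminus M := by
  rw [eq_of_transpose_eq_neg hM]
  constructor <;> ext i <;> fin_cases i <;>
    simp [vplus, vminus, rotX, rotPlanes0123, mul_apply, Fin.sum_univ_four,
      cos_add, sin_add, cos_sub, sin_sub] <;> ring_nf <;> simp [sin_sq] <;> ring

lemma rotPlanes0312_conj {M : Matrix (Fin 4) (Fin 4) ℝ} (hM : Mᵀ = -M) (α β : ℝ) :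
    vplus ((rotPlanes0312 α β)ᵀ * M * rotPlanes0312 α β) = rotZ (-(α + β)) *ᵥ vplus M ∧
      vminus ((rotPlanes0312 α β)ᵀ * M * rotPlanes0312 α β) = rotZ (α - β) *ᵥ vminus M := by
  rw [eq_of_transpose_eq_neg hM]
  constructor <;> ext i <;> fin_cases i <;>
    simp [vplus, vminus, rotZ, rotPlanes0312, mul_apply, Fin.sum_univ_four,
      cos_add, sin_add, cos_sub, sin_sub] <;> ring_nf <;> simp [sin_sq] <;> ring

def conjugationPairs : Submonoid (Matrix (Fin 3) (Fin 3) ℝ × Matrix (Fin 3) (Fin 3) ℝ) where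
  carrier := {PQ | ∃ S ∈ orthogonalGroup (Fin 4) ℝ, ∀ M : Matrix (Fin 4) (Fin 4) ℝ, Mᵀ = -M →
    vplus (Sᵀ * M * S) = PQ.1 *ᵥ vplus M ∧ vminus (Sᵀ * M * S) = PQ.2 *ᵥ vminus M}
  one_mem' := ⟨1, one_mem _, fun M _ => by simp⟩
  mul_mem' := by
    rintro ⟨P₁, Q₁⟩ ⟨P₂, Q₂⟩ ⟨S₁, hS₁, h₁⟩ ⟨S₂, hS₂, h₂⟩
    refine ⟨S₂ * S₁, mul_mem hS₂ hS₁, fun M hM => ?_⟩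
    have hM₂ : (S₂ᵀ * M * S₂)ᵀ = -(S₂ᵀ * M * S₂) := by
      simp [transpose_mul, hM, Matrix.mul_assoc]
    have e : (S₂ * S₁)ᵀ * M * (S₂ * S₁) = S₁ᵀ * (S₂ᵀ * M * S₂) * S₁ := by
      simp [transpose_mul, Matrix.mul_assoc]
    rw [e, (h₁ _ hM₂).1, (h₁ _ hM₂).2, (h₂ M hM).1, (h₂ M hM).2, mulVec_mulVec, mulVec_mulVec]
    exact ⟨rfl, rfl⟩

lemma rotX_pair_mem_conjugationPairs (θp θm : ℝ) : (rotX θp, rotX θm) ∈ conjugationPairs := by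
  refine ⟨rotPlanes0123 ((θm - θp) / 2) (-(θp + θm) / 2), rotPlanes0123_mem_orthogonalGroup _ _,
    fun M hM => ?_⟩
  convert rotPlanes0123_conj hM _ _ using 3 <;> ring_nf

lemma rotZ_pair_mem_conjugationPairs (θp θm : ℝ) : (rotZ θp, rotZ θm) ∈ conjugationPairs := by
  refine ⟨rotPlanes0312 ((θm - θp) / 2) (-(θp + θm) / 2), rotPlanes0312_mem_orthogonalGroup _ _,
    fun M hM => ?_⟩
  convert rotPlanes0312_conj hM _ _ using 3 <;> ring_nf

lemma mk_mem_conjugationPairs {P Q : Matrix (Fin 3) (Fin 3) ℝ} (hP : P ∈ axisRotations)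
    (hQ : Q ∈ axisRotations) : (P, Q) ∈ conjugationPairs := by
  have hinl : axisRotations ≤ conjugationPairs.comap (MonoidHom.inl _ _) := by
    rw [axisRotations, Submonoid.closure_le]
    rintro _ (⟨θ, rfl⟩ | ⟨θ, rfl⟩)
    · simpa using rotX_pair_mem_conjugationPairs θ 0
    · simpa using rotZ_pair_mem_conjugationPairs θ 0
  have hinr : axisRotations ≤ conjugationPairs.comap (MonoidHom.inr _ _) := by
    rw [axisRotations, Submonoid.closure_le]
    rintro _ (⟨θ, rfl⟩ | ⟨θ, rfl⟩)
    · simpa using rotX_pair_mem_conjugationPairs 0 θ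
    · simpa using rotZ_pair_mem_conjugationPairs 0 θ
  simpa using mul_mem (show (P, 1) ∈ conjugationPairs from hinl hP)
    (show (1, Q) ∈ conjugationPairs from hinr hQ)

/-- normal form of a linear map `j : ℝ² → Skew(4)` under the `O(2) × O(4)`
action: one can arrange `j₋(e₁) = (a,0,0)`, `j₋(e₂) = (0,b,0)`, `j₊(e₁) = (p,0,0)` and
`j₊(e₂) = (r,q,0)` with `0 ≤ a ≤ b` and `p, q, r ≥ 0`. -/
theorem normal_form_of_j (j : (Fin 2 → ℝ) →ₗ[ℝ] Matrix (Fin 4) (Fin 4) ℝ)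
    (hjskew : ∀ z, (j z)ᵀ = -(j z)) :
    ∃ T ∈ Matrix.orthogonalGroup (Fin 2) ℝ, ∃ S ∈ Matrix.orthogonalGroup (Fin 4) ℝ,
      ∃ a b p q r : ℝ, 0 ≤ a ∧ a ≤ b ∧ 0 ≤ p ∧ 0 ≤ q ∧ 0 ≤ r ∧
        vminus (Sᵀ * j (T.mulVec (Pi.single 0 1)) * S) = ![a, 0, 0] ∧
        vminus (Sᵀ * j (T.mulVec (Pi.single 1 1)) * S) = ![0, b, 0] ∧
        vplus (Sᵀ * j (T.mulVec (Pi.single 0 1)) * S) = ![p, 0, 0] ∧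
        vplus (Sᵀ * j (T.mulVec (Pi.single 1 1)) * S) = ![r, q, 0] := by
  obtain ⟨T, hT, hminus_orth, hminus_le, hplus_nonneg⟩ :=
    exists_mem_orthogonalGroup_two_map_col_orthogonal (vminusₗ ∘ₗ j) (vplusₗ ∘ₗ j)
  obtain ⟨Q, hQ, a, b, ha, hab, hQ₀, hQ₁⟩ :=
    exists_axisRotations_of_dotProduct_eq_zero hminus_orth hminus_le
  obtain ⟨P, hP, p, q, r, hp, hq, hr, hP₀, hP₁⟩ :=
    exists_axisRotations_of_dotProduct_nonneg hplus_nonneg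
  obtain ⟨S, hS, hconj⟩ := mk_mem_conjugationPairs hP hQ
  refine ⟨T, hT, S, hS, a, b, p, q, r, ha, hab, hp, hq, hr, ?_, ?_, ?_, ?_⟩ <;>
    simp only [mulVec_single_one, (hconj _ (hjskew _)).1, (hconj _ (hjskew _)).2]
  exacts [hQ₀, hQ₁, hP₀, hP₁]
end

section
/- Let c : ℝ⁶ × ℝ⁶ → ℝ⁶ be the alternating bilinear map with c(e₁,e₃) = e₅, c(e₄,e₂) = e₅, c(e₁,e₄) = e₆, c(e₂,e₃) = e₆, and c(eᵢ,eⱼ) = 0 for all other pairs i < j (the complex Heisenberg Lie algebra h₃^ℂ), and let c̃ be the alternating bilinear map with c̃(e₁,e₂) = e₅, c̃(e₁,e₃) = e₆, and c̃(eᵢ,eⱼ) = 0 otherwise (the Lie algebra n₅ ⊕ ℝ). Then there exists a family gₛ ∈ GL(6, ℝ), s ∈ (0,1], such that for all x, y ∈ ℝ⁶ the brackets (gₛ · c)(x, y) := gₛ c(gₛ⁻¹x, gₛ⁻¹y) converge to c̃(x, y) as s → 0. In other words, h₃^ℂ degenerates to n₅ ⊕ ℝ. -/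
/-- The bracket of the complex Heisenberg Lie algebra `h₃^ℂ = (0,0,0,0,13+42,14+23)`:
`c(e₁,e₃) = e₅ = c(e₄,e₂)`, `c(e₁,e₄) = e₆ = c(e₂,e₃)`. -/
noncomputable def cH3C (x y : Fin 6 → ℝ) : Fin 6 → ℝ :=
  (x 0 * y 2 - x 2 * y 0 + x 3 * y 1 - x 1 * y 3) • (Pi.single 4 1 : Fin 6 → ℝ) +
  (x 0 * y 3 - x 3 * y 0 + x 1 * y 2 - x 2 * y 1) • (Pi.single 5 1 : Fin 6 → ℝ)

/-- The bracket of `n₅ ⊕ ℝ = (0,0,0,0,12,13)`: `c̃(e₁,e₂) = e₅`, `c̃(e₁,e₃) = e₆`. -/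
noncomputable def cN5R (x y : Fin 6 → ℝ) : Fin 6 → ℝ :=
  (x 0 * y 1 - x 1 * y 0) • (Pi.single 4 1 : Fin 6 → ℝ) + (x 0 * y 2 - x 2 * y 0) • (Pi.single 5 1 : Fin 6 → ℝ)


lemma cons_val_five {α : Type*} (a b c d e f : α) :
    (![a, b, c, d, e, f] : Fin 6 → α) 5 = f := rfl

/-- The degenerating family: `g e₁ = e₁`, `g e₂ = e₄/s`, `g e₃ = e₂/s`, `g e₄ = e₃/s`,
`g e₅ = e₅/s`, `g e₆ = e₆/s`. -/
noncomputable def Gmap (s : ℝ) (hs : s ≠ 0) : (Fin 6 → ℝ) ≃ₗ[ℝ] (Fin 6 → ℝ) where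
  toFun x := ![x 0, x 2 / s, x 3 / s, x 1 / s, x 4 / s, x 5 / s]
  invFun x := ![x 0, s * x 3, s * x 1, s * x 2, s * x 4, s * x 5]
  map_add' x y := by
    funext i; fin_cases i <;> simp [cons_val_five, add_div]
  map_smul' r x := by
    funext i; fin_cases i <;> simp [cons_val_five, mul_div_assoc]
  left_inv x := by
    funext i; fin_cases i <;> simp [cons_val_five] <;> field_simp
  right_inv x := by
    funext i; fin_cases i <;> simp [cons_val_five] <;> field_simp

lemma Gmap_apply (s : ℝ) (hs : s ≠ 0) (x : Fin 6 → ℝ) :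
    Gmap s hs x = ![x 0, x 2 / s, x 3 / s, x 1 / s, x 4 / s, x 5 / s] := rfl

lemma Gmap_symm_apply (s : ℝ) (hs : s ≠ 0) (x : Fin 6 → ℝ) :
    (Gmap s hs).symm x = ![x 0, s * x 3, s * x 1, s * x 2, s * x 4, s * x 5] := rfl

/-- the complex Heisenberg Lie algebra `h₃^ℂ` degenerates to `n₅ ⊕ ℝ`:
there is a family `gₛ ∈ GL(6,ℝ)` with `gₛ · c → c̃` as `s → 0⁺`. -/
theorem h3C_degenerates_to_n5R :
    ∃ g : ℝ → ((Fin 6 → ℝ) ≃ₗ[ℝ] (Fin 6 → ℝ)),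
      ∀ x y : Fin 6 → ℝ,
        Filter.Tendsto (fun s : ℝ => g s (cH3C ((g s).symm x) ((g s).symm y)))
          (nhdsWithin 0 (Set.Ioi 0)) (nhds (cN5R x y)) := by
  refine ⟨fun s => Gmap (if s = 0 then 1 else s) (by split <;> simp_all), fun x y => ?_⟩
  set w : Fin 6 → ℝ :=
    (x 2 * y 3 - x 3 * y 2) • (Pi.single 4 1 : Fin 6 → ℝ) +
    (x 3 * y 1 - x 1 * y 3) • (Pi.single 5 1 : Fin 6 → ℝ) with hw
  have key : (fun s : ℝ => cN5R x y + s • w) =ᶠ[nhdsWithin 0 (Set.Ioi 0)]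
      (fun s : ℝ => (Gmap (if s = 0 then 1 else s) (by split <;> simp_all))
        (cH3C ((Gmap (if s = 0 then 1 else s) (by split <;> simp_all)).symm x)
          ((Gmap (if s = 0 then 1 else s) (by split <;> simp_all)).symm y))) := by
    filter_upwards [self_mem_nhdsWithin] with s hs
    have hs' : (s : ℝ) ≠ 0 := ne_of_gt hs
    simp only [if_neg hs', Gmap_apply, Gmap_symm_apply, cH3C, cN5R, hw]
    funext i
    fin_cases i
    all_goals simp [cons_val_five, Pi.single_apply]
    all_goals field_simp
    all_goals ring
  have lim : Filter.Tendsto (fun s : ℝ => cN5R x y + s • w)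
      (nhdsWithin 0 (Set.Ioi 0)) (nhds (cN5R x y)) := by
    have : Filter.Tendsto (fun s : ℝ => cN5R x y + s • w) (nhds 0)
        (nhds (cN5R x y + (0:ℝ) • w)) :=
      (continuous_const.add (continuous_id.smul continuous_const)).tendsto 0
    simpa using this.mono_left nhdsWithin_le_nhds
  exact lim.congr' key
end
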